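/- arXiv:2506.09245 — 5 statements merged into one kernel-verified Lean document; each statement's English description precedes it below -/
import Mathlib

section
/- If the repair-state balance equations hold, then for all real z1, z2 ∈ [0,1] the generating functions satisfy (λ(1−z1) + γ)·Π1(z1,z2) = α·Π0(z1,z2) (the paper's equation (3b), equivalently Π1(z1,z2) = (α/(λ(1−z1)+γ))·Π0(z1,z2)). -/
open scoped BigOperators

/-- Paper's equation (3b): the repair-state balance equations imply
`(λ(1−z1)+γ)·Π1(z1,z2) = α·Π0(z1,z2)` for all `z1, z2 ∈ [0,1]`. -/
theorem stmt_0
    (lam mu1 mu2 alpha gam : ℝ)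
    (hlam : 0 < lam) (hmu1 : 0 < mu1) (hmu2 : 0 < mu2)
    (halpha : 0 < alpha) (hgam : 0 < gam)
    (q0 q1 : ℕ × ℕ → ℝ)
    (hq0 : ∀ p, 0 ≤ q0 p) (hq1 : ∀ p, 0 ≤ q1 p)
    (hs0 : Summable q0) (hs1 : Summable q1)
    (hbal0 : ∀ k : ℕ, (lam + gam) * q1 (0, k) = alpha * q0 (0, k))
    (hbal1 : ∀ n k : ℕ,
      (lam + gam) * q1 (n + 1, k) = alpha * q0 (n + 1, k) + lam * q1 (n, k)) :
    ∀ z1 ∈ Set.Icc (0 : ℝ) 1, ∀ z2 ∈ Set.Icc (0 : ℝ) 1,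
      (lam * (1 - z1) + gam) * (∑' n : ℕ, ∑' k : ℕ, q1 (n, k) * z1 ^ n * z2 ^ k)
        = alpha * (∑' n : ℕ, ∑' k : ℕ, q0 (n, k) * z1 ^ n * z2 ^ k) := by
  rintro z1 ⟨hz10, hz11⟩ z2 ⟨hz20, hz21⟩
  set g0 : ℕ × ℕ → ℝ := fun p => q0 p * z1 ^ p.1 * z2 ^ p.2 with hg0def
  set g1 : ℕ × ℕ → ℝ := fun p => q1 p * z1 ^ p.1 * z2 ^ p.2 with hg1def
  have hz1p : ∀ n : ℕ, 0 ≤ z1 ^ n := fun n => pow_nonneg hz10 n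
  have hz2p : ∀ n : ℕ, 0 ≤ z2 ^ n := fun n => pow_nonneg hz20 n
  have hz1le : ∀ n : ℕ, z1 ^ n ≤ 1 := fun n => pow_le_one₀ hz10 hz11
  have hz2le : ∀ n : ℕ, z2 ^ n ≤ 1 := fun n => pow_le_one₀ hz20 hz21
  have hg0nn : ∀ p, 0 ≤ g0 p := fun p =>
    mul_nonneg (mul_nonneg (hq0 p) (hz1p p.1)) (hz2p p.2)
  have hg1nn : ∀ p, 0 ≤ g1 p := fun p =>
    mul_nonneg (mul_nonneg (hq1 p) (hz1p p.1)) (hz2p p.2)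
  have hg0le : ∀ p, g0 p ≤ q0 p := by
    intro p
    calc g0 p ≤ q0 p * z1 ^ p.1 :=
          mul_le_of_le_one_right (mul_nonneg (hq0 p) (hz1p p.1)) (hz2le p.2)
      _ ≤ q0 p := mul_le_of_le_one_right (hq0 p) (hz1le p.1)
  have hg1le : ∀ p, g1 p ≤ q1 p := by
    intro p
    calc g1 p ≤ q1 p * z1 ^ p.1 :=
          mul_le_of_le_one_right (mul_nonneg (hq1 p) (hz1p p.1)) (hz2le p.2)
      _ ≤ q1 p := mul_le_of_le_one_right (hq1 p) (hz1le p.1)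
  have hg0s : Summable g0 := Summable.of_nonneg_of_le hg0nn hg0le hs0
  have hg1s : Summable g1 := Summable.of_nonneg_of_le hg1nn hg1le hs1
  set A : ℕ → ℝ := fun n => ∑' k : ℕ, g1 (n, k) with hAdef
  set B : ℕ → ℝ := fun n => ∑' k : ℕ, g0 (n, k) with hBdef
  have hA : Summable A := ((summable_prod_of_nonneg hg1nn).mp hg1s).2
  have hB : Summable B := ((summable_prod_of_nonneg hg0nn).mp hg0s).2
  have hAk : ∀ n, Summable fun k => g1 (n, k) := fun n => hg1s.prod_factor n
  have hBk : ∀ n, Summable fun k => g0 (n, k) := fun n => hg0s.prod_factor n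
  -- base case
  have h0 : (lam + gam) * A 0 = alpha * B 0 := by
    rw [hAdef, hBdef, ← tsum_mul_left, ← tsum_mul_left]
    congr 1; funext k
    simp only [hg0def, hg1def]
    linear_combination (z2 ^ k) * hbal0 k
  -- recurrence
  have hrec : ∀ n : ℕ, (lam + gam) * A (n + 1) = alpha * B (n + 1) + lam * z1 * A n := by
    intro n
    have hterm : ∀ k : ℕ, (lam + gam) * g1 (n + 1, k)
        = alpha * g0 (n + 1, k) + lam * z1 * g1 (n, k) := by
      intro k
      simp only [hg0def, hg1def]
      linear_combination (z1 ^ (n + 1) * z2 ^ k) * hbal1 n k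
    calc (lam + gam) * A (n + 1)
        = ∑' k : ℕ, (lam + gam) * g1 (n + 1, k) := (tsum_mul_left).symm
      _ = ∑' k : ℕ, (alpha * g0 (n + 1, k) + lam * z1 * g1 (n, k)) := by
          exact tsum_congr hterm
      _ = (∑' k : ℕ, alpha * g0 (n + 1, k)) + ∑' k : ℕ, lam * z1 * g1 (n, k) :=
          Summable.tsum_add ((hBk (n + 1)).mul_left _) ((hAk n).mul_left _)
      _ = alpha * B (n + 1) + lam * z1 * A n := by rw [tsum_mul_left, tsum_mul_left]
  have hAs : Summable fun n => A (n + 1) := (summable_nat_add_iff 1).mpr hA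
  have hBs : Summable fun n => B (n + 1) := (summable_nat_add_iff 1).mpr hB
  have hS1 : ∑' n, A n = A 0 + ∑' n, A (n + 1) := Summable.tsum_eq_zero_add hA
  have hS0 : ∑' n, B n = B 0 + ∑' n, B (n + 1) := Summable.tsum_eq_zero_add hB
  have hT : (lam + gam) * (∑' n, A (n + 1))
      = alpha * (∑' n, B (n + 1)) + lam * z1 * ∑' n, A n := by
    calc (lam + gam) * (∑' n, A (n + 1))
        = ∑' n, (lam + gam) * A (n + 1) := (tsum_mul_left).symm
      _ = ∑' n, (alpha * B (n + 1) + lam * z1 * A n) := tsum_congr hrec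
      _ = (∑' n, alpha * B (n + 1)) + ∑' n, lam * z1 * A n :=
          Summable.tsum_add (hBs.mul_left _) (hA.mul_left _)
      _ = alpha * (∑' n, B (n + 1)) + lam * z1 * ∑' n, A n := by
          rw [tsum_mul_left, tsum_mul_left]
  have key : (lam * (1 - z1) + gam) * (∑' n, A n) = alpha * (∑' n, B n) := by
    nlinarith [h0, hT, hS1, hS0]
  simpa [hAdef, hBdef, hg0def, hg1def] using key
end

section
/- If the repair-state balance equations hold and the normalization condition Σ_{n,k} (q0(n,k) + q1(n,k)) = 1 holds, then Π0(1,1) = Σ_{n,k} q0(n,k) = γ/(α+γ) and Π1(1,1) = Σ_{n,k} q1(n,k) = α/(α+γ). -/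
open scoped BigOperators

/-- If the repair-state balance equations and the normalization condition hold, then
`Π0(1,1) = Σ q0 = γ/(α+γ)` and `Π1(1,1) = Σ q1 = α/(α+γ)`. -/
theorem stmt_1
    (lam mu1 mu2 alpha gam : ℝ)
    (hlam : 0 < lam) (hmu1 : 0 < mu1) (hmu2 : 0 < mu2)
    (halpha : 0 < alpha) (hgam : 0 < gam)
    (q0 q1 : ℕ × ℕ → ℝ)
    (hq0 : ∀ p, 0 ≤ q0 p) (hq1 : ∀ p, 0 ≤ q1 p)
    (hs0 : Summable q0) (hs1 : Summable q1)
    (hbal0 : ∀ k : ℕ, (lam + gam) * q1 (0, k) = alpha * q0 (0, k))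
    (hbal1 : ∀ n k : ℕ,
      (lam + gam) * q1 (n + 1, k) = alpha * q0 (n + 1, k) + lam * q1 (n, k))
    (hnorm : ∑' p : ℕ × ℕ, (q0 p + q1 p) = 1) :
    ((∑' n : ℕ, ∑' k : ℕ, q0 (n, k) * (1 : ℝ) ^ n * (1 : ℝ) ^ k)
        = ∑' p : ℕ × ℕ, q0 p
      ∧ (∑' p : ℕ × ℕ, q0 p) = gam / (alpha + gam))
    ∧ ((∑' n : ℕ, ∑' k : ℕ, q1 (n, k) * (1 : ℝ) ^ n * (1 : ℝ) ^ k)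
        = ∑' p : ℕ × ℕ, q1 p
      ∧ (∑' p : ℕ × ℕ, q1 p) = alpha / (alpha + gam)) := by
  set S0 := ∑' p : ℕ × ℕ, q0 p with hS0
  set S1 := ∑' p : ℕ × ℕ, q1 p with hS1
  -- the shifted function
  set g : ℕ × ℕ → ℝ := fun p => if p.1 = 0 then 0 else lam * q1 (p.1 - 1, p.2) with hg
  have e_inj : Function.Injective (fun p : ℕ × ℕ => (p.1 + 1, p.2)) := by
    intro a b h
    simp only [Prod.mk.injEq] at h
    exact Prod.ext (by omega) h.2
  have hrange : ∀ x ∉ Set.range (fun p : ℕ × ℕ => (p.1 + 1, p.2)), g x = 0 := by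
    rintro ⟨n, k⟩ hx
    rcases n with _ | m
    · simp [hg]
    · exact absurd ⟨(m, k), rfl⟩ hx
  have hcomp : (g ∘ fun p : ℕ × ℕ => (p.1 + 1, p.2)) = fun p => lam * q1 p := by
    funext p; simp [hg]
  have hgsum : Summable g := by
    rw [← e_inj.summable_iff hrange, hcomp]
    exact hs1.mul_left lam
  have hgt : ∑' p, g p = lam * S1 := by
    rw [← e_inj.tsum_eq (Function.support_subset_iff'.mpr hrange)]
    have hc : ∀ c : ℕ × ℕ, g (c.1 + 1, c.2) = lam * q1 c := by
      rintro ⟨n, k⟩; simp [hg]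
    rw [tsum_congr hc, tsum_mul_left]
  have hpt : ∀ p : ℕ × ℕ, (lam + gam) * q1 p = alpha * q0 p + g p := by
    rintro ⟨n, k⟩
    rcases n with _ | m
    · simpa [hg] using hbal0 k
    · simpa [hg] using hbal1 m k
  have hkey : (lam + gam) * S1 = alpha * S0 + lam * S1 := by
    have h1 : ∑' p, (lam + gam) * q1 p = (lam + gam) * S1 := tsum_mul_left
    have h2 : ∑' p, (alpha * q0 p + g p) = alpha * S0 + lam * S1 := by
      rw [Summable.tsum_add (hs0.mul_left alpha) hgsum, tsum_mul_left, hgt]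
    rw [← h1, ← h2]
    exact tsum_congr hpt
  have hsum : S0 + S1 = 1 := by
    rw [hS0, hS1, ← Summable.tsum_add hs0 hs1]; exact hnorm
  have h01 : gam * S1 = alpha * S0 := by linarith
  have hS0v : S0 = gam / (alpha + gam) := by
    have hne : alpha + gam ≠ 0 := by positivity
    field_simp
    linear_combination gam * hsum - h01
  have hS1v : S1 = alpha / (alpha + gam) := by
    have hne : alpha + gam ≠ 0 := by positivity
    field_simp
    linear_combination alpha * hsum + h01
  have hprod0 : (∑' n : ℕ, ∑' k : ℕ, q0 (n, k) * (1 : ℝ) ^ n * (1 : ℝ) ^ k) = S0 := by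
    simp only [one_pow, mul_one]
    exact (Summable.tsum_prod hs0).symm
  have hprod1 : (∑' n : ℕ, ∑' k : ℕ, q1 (n, k) * (1 : ℝ) ^ n * (1 : ℝ) ^ k) = S1 := by
    simp only [one_pow, mul_one]
    exact (Summable.tsum_prod hs1).symm
  exact ⟨⟨hprod0, hS0v⟩, ⟨hprod1, hS1v⟩⟩
end

section
/- Assume r*(0) = 1, h*(0) = 1, r* is differentiable at 0 with r*'(0) = −1/γ, h* is differentiable at 0 with h*'(0) = −(1/μ1 + 1/μ2), λ·(1+α/γ)·(1/μ1+1/μ2) ≠ 1, h*(φ(z)) ≠ z for all z in some left neighborhood of 1, and P(z) → 1 as z → 1⁻. Then the idle probability satisfies p0 = 1 − λ·(1 + α/γ)·(1/μ1 + 1/μ2). -/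
open Filter Topology

/-! The PGF has the form `P(z) = g(z)·(1 − z)·p0 / (g(z) − z)` with `g = h* ∘ φ`, `g(1) = 1`.
Dividing numerator and denominator by `1 − z`, the denominator becomes `1 − slope g 1 z`,
which tends to `1 − g'(1) = 1 − ρ` by the chain rule, so `P(z) → p0 / (1 − ρ)`; normalisation
`P(1⁻) = 1` then forces `p0 = 1 − ρ`. -/

theorem tendsto_sub_self_div_one_sub {𝕜 : Type*} [NontriviallyNormedField 𝕜] {g : 𝕜 → 𝕜}
    {ρ : 𝕜} (hg : HasDerivAt g ρ 1) (hg1 : g 1 = 1) :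
    Tendsto (fun z => (g z - z) / (1 - z)) (𝓝[≠] 1) (𝓝 (1 - ρ)) := by
  have hslope : Tendsto (slope g 1) (𝓝[≠] 1) (𝓝 ρ) := hasDerivAt_iff_tendsto_slope.mp hg
  refine (tendsto_const_nhds.sub hslope).congr' ?_
  filter_upwards [self_mem_nhdsWithin] with z hz
  have hz1 : 1 - z ≠ 0 := sub_ne_zero.mpr (Ne.symm hz)
  have hz1' : z - 1 ≠ 0 := sub_ne_zero.mpr hz
  rw [slope_def_field, hg1]
  field_simp
  ring

theorem tendsto_mul_one_sub_mul_div_sub_self {𝕜 : Type*} [NontriviallyNormedField 𝕜]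
    {g : 𝕜 → 𝕜} {ρ : 𝕜} (hg : HasDerivAt g ρ 1) (hg1 : g 1 = 1) (hρ : ρ ≠ 1) (p : 𝕜) :
    Tendsto (fun z => g z * (1 - z) * p / (g z - z)) (𝓝[≠] 1) (𝓝 (p / (1 - ρ))) := by
  have hgc : Tendsto g (𝓝[≠] 1) (𝓝 1) := by
    simpa only [hg1] using hg.continuousAt.continuousWithinAt.tendsto
  have hlim := (hgc.mul_const p).div (tendsto_sub_self_div_one_sub hg hg1)
    (sub_ne_zero.mpr hρ.symm)
  rw [one_mul] at hlim
  refine hlim.congr fun z => ?_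
  simp only [Pi.div_apply, div_div_eq_mul_div]
  ring

theorem hasDerivAt_arrival_repair_exponent {lam alpha r' : ℝ} {rstar : ℝ → ℝ}
    (hr : HasDerivAt rstar r' 0) :
    HasDerivAt (fun z => lam * (1 - z) + alpha - alpha * rstar (lam * (1 - z)))
      (-(lam * (1 - alpha * r'))) 1 := by
  have hinner : HasDerivAt (fun z : ℝ => lam * (1 - z)) (-lam) 1 := by
    simpa using ((hasDerivAt_id (1 : ℝ)).const_sub 1).const_mul lam
  have hr1 : HasDerivAt rstar r' (lam * (1 - 1)) := by rwa [sub_self, mul_zero]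
  refine ((hinner.add_const alpha).sub ((hr1.comp 1 hinner).const_mul alpha)).congr_deriv ?_
  ring

theorem stmt_7_general
    (lam mu1 mu2 alpha gam : ℝ)
    (p0 : ℝ) (rstar hstar : ℝ → ℝ)
    (hr0 : rstar 0 = 1) (hh0 : hstar 0 = 1)
    (hr' : HasDerivAt rstar (-(1 / gam)) 0)
    (hh' : HasDerivAt hstar (-(1 / mu1 + 1 / mu2)) 0)
    (hne : lam * (1 + alpha / gam) * (1 / mu1 + 1 / mu2) ≠ 1)
    (hlim : Filter.Tendsto
      (fun z : ℝ =>
        hstar (lam * (1 - z) + alpha - alpha * rstar (lam * (1 - z))) * (1 - z) * p0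
          / (hstar (lam * (1 - z) + alpha - alpha * rstar (lam * (1 - z))) - z))
      (nhdsWithin 1 (Set.Iio (1 : ℝ))) (nhds 1)) :
    p0 = 1 - lam * (1 + alpha / gam) * (1 / mu1 + 1 / mu2) := by
  set ρ := lam * (1 + alpha / gam) * (1 / mu1 + 1 / mu2)
  have hφ1 : lam * (1 - 1) + alpha - alpha * rstar (lam * (1 - 1)) = 0 := by
    simp [hr0]
  have hg : HasDerivAt (fun z => hstar (lam * (1 - z) + alpha - alpha * rstar (lam * (1 - z))))
      ρ 1 :=
    (hh'.comp_of_eq 1 (hasDerivAt_arrival_repair_exponent hr') hφ1.symm).congr_deriv (by ring)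
  have hg1 : hstar (lam * (1 - 1) + alpha - alpha * rstar (lam * (1 - 1))) = 1 := by
    rw [hφ1, hh0]
  have hP := (tendsto_mul_one_sub_mul_div_sub_self hg hg1 hne p0).mono_left
    (nhdsWithin_mono 1 fun z (hz : z ∈ Set.Iio 1) => hz.ne)
  have hp0 : p0 / (1 - ρ) = 1 := tendsto_nhds_unique hP hlim
  rwa [div_eq_one_iff_eq (sub_ne_zero.mpr hne.symm)] at hp0

/-- The idle probability of the unreliable two-node M/G/1 tandem queue (paper's
equation (16) and the following remark): from the PGF of the system size
`P(z) = h*(φ(z))·(1−z)·p0 / (h*(φ(z)) − z)` with `φ(z) = λ(1−z) + α − α·r*(λ(1−z))`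
and `P(z) → 1` as `z → 1⁻`, one obtains `p0 = 1 − λ·(1+α/γ)·(1/μ1+1/μ2)`. -/
theorem stmt_7
    (lam mu1 mu2 alpha gam : ℝ)
    (hlam : 0 < lam) (hmu1 : 0 < mu1) (hmu2 : 0 < mu2)
    (halpha : 0 < alpha) (hgam : 0 < gam)
    (p0 : ℝ) (rstar hstar : ℝ → ℝ)
    (hr0 : rstar 0 = 1) (hh0 : hstar 0 = 1)
    (hr' : HasDerivAt rstar (-(1 / gam)) 0)
    (hh' : HasDerivAt hstar (-(1 / mu1 + 1 / mu2)) 0)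
    (hne : lam * (1 + alpha / gam) * (1 / mu1 + 1 / mu2) ≠ 1)
    (hker : ∀ᶠ z in nhdsWithin 1 (Set.Iio (1 : ℝ)),
      hstar (lam * (1 - z) + alpha - alpha * rstar (lam * (1 - z))) ≠ z)
    (hlim : Filter.Tendsto
      (fun z : ℝ =>
        hstar (lam * (1 - z) + alpha - alpha * rstar (lam * (1 - z))) * (1 - z) * p0
          / (hstar (lam * (1 - z) + alpha - alpha * rstar (lam * (1 - z))) - z))
      (nhdsWithin 1 (Set.Iio (1 : ℝ))) (nhds 1)) :
    p0 = 1 - lam * (1 + alpha / gam) * (1 / mu1 + 1 / mu2) :=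
  stmt_7_general lam mu1 mu2 alpha gam p0 rstar hstar hr0 hh0 hr' hh' hne hlim
end

section
/- Assume W* is differentiable at 0 with W*(0) = 1, h* is continuous at 0 and at λ and h*(0) = 1, h*(λ) ≠ 0, and s + λ·h*(s+λ) ≠ 0 for s in a neighborhood of 0. Then Δ* is differentiable at 0 and the average age of information Δ = −(d/ds)Δ*(s) |_{s=0} = −W*'(0) + p0/(λ·h*(λ)). -/
open scoped BigOperators

/-- If `g` is continuous at `0`, then `s ↦ s * g s` has derivative `g 0` at `0`. -/
lemma aux_hasDerivAt_mul_cont {g : ℝ → ℝ} (hg : ContinuousAt g 0) :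
    HasDerivAt (fun s : ℝ => s * g s) (g 0) 0 := by
  rw [hasDerivAt_iff_tendsto_slope]
  have h1 : Filter.Tendsto g (nhdsWithin (0:ℝ) {(0:ℝ)}ᶜ) (nhds (g 0)) :=
    hg.continuousWithinAt.tendsto
  refine h1.congr' ?_
  filter_upwards [self_mem_nhdsWithin] with s hs
  have hs' : s ≠ 0 := hs
  simp [slope_def_field, div_eq_iff hs']
  field_simp

/-- The average age of information (paper's equation (10) applied to equation (18)):
`Δ*(s) = W*(s) − s·p0·h*(s)/(s + λ·h*(s+λ))` is differentiable at `0` and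
`Δ = −Δ*'(0) = −W*'(0) + p0/(λ·h*(λ))`. -/
theorem stmt_9
    (lam : ℝ) (hlam : 0 < lam)
    (p0 : ℝ) (Wstar hstar : ℝ → ℝ)
    (hWdiff : DifferentiableAt ℝ Wstar 0) (hW0 : Wstar 0 = 1)
    (hhc0 : ContinuousAt hstar 0) (hhcl : ContinuousAt hstar lam)
    (hh0 : hstar 0 = 1) (hhl : hstar lam ≠ 0)
    (hden : ∀ᶠ s in nhds (0 : ℝ), s + lam * hstar (s + lam) ≠ 0) :
    DifferentiableAt ℝ
      (fun s : ℝ => Wstar s - s * p0 * hstar s / (s + lam * hstar (s + lam))) 0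
    ∧ -(deriv
          (fun s : ℝ => Wstar s - s * p0 * hstar s / (s + lam * hstar (s + lam))) 0)
      = -(deriv Wstar 0) + p0 / (lam * hstar lam) := by
  set g : ℝ → ℝ := fun s => p0 * hstar s / (s + lam * hstar (s + lam)) with hgdef
  have hdenc : ContinuousAt (fun s : ℝ => s + lam * hstar (s + lam)) 0 := by
    have : ContinuousAt (fun s : ℝ => hstar (s + lam)) 0 := by
      exact ContinuousAt.comp (g := hstar) (f := fun s : ℝ => s + lam)
        (by simpa using hhcl) (by fun_prop)
    exact continuousAt_id.add (continuousAt_const.mul this)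
  have hden0 : (0:ℝ) + lam * hstar (0 + lam) ≠ 0 := by
    simpa using mul_ne_zero (ne_of_gt hlam) (by simpa using hhl)
  have hgc : ContinuousAt g 0 :=
    ((continuousAt_const.mul hhc0)).div hdenc hden0
  have hg0 : g 0 = p0 / (lam * hstar lam) := by
    simp [hgdef, hh0]
  have hf : HasDerivAt (fun s : ℝ => s * g s) (g 0) 0 := aux_hasDerivAt_mul_cont hgc
  have heq : (fun s : ℝ => s * p0 * hstar s / (s + lam * hstar (s + lam)))
      = fun s : ℝ => s * g s := by
    funext s; simp [hgdef]; ring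
  have hW : HasDerivAt Wstar (deriv Wstar 0) 0 := hWdiff.hasDerivAt
  have htot : HasDerivAt
      (fun s : ℝ => Wstar s - s * p0 * hstar s / (s + lam * hstar (s + lam)))
      (deriv Wstar 0 - g 0) 0 := by
    rw [show (fun s : ℝ => Wstar s - s * p0 * hstar s / (s + lam * hstar (s + lam)))
        = fun s : ℝ => Wstar s - s * g s by funext s; rw [show s * g s = s * p0 * hstar s / (s + lam * hstar (s + lam)) from (congrFun heq s).symm]]
    exact hW.sub hf
  refine ⟨htot.differentiableAt, ?_⟩
  rw [htot.deriv, hg0]; ring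
end

section
/- Let T be a nonnegative real-valued random variable and Y an exponential random variable with rate λ > 0, independent of T. Then for every s > 0: E[exp(−s·max(T, Y))] = E[exp(−s·T)] − (s/(s+λ))·E[exp(−(s+λ)·T)]. (This identity produces the peak-age term W*(s+λ)·s·h*(s)/(s+λ) appearing in the paper's AoI LST, equation (9), where the accumulated age of an update is max(X_{n−1}, Y_n) + S_n with exponential inter-arrival time Y_n.) -/
open MeasureTheory ProbabilityTheory Real Set

/-! Conditioning on `T = t ≥ 0`, the event `Y ≤ t` has probability `1 - e^{-λt}` and contributes
`e^{-st}`, while on `Y > t` the density `λ e^{-λy}` combines with `e^{-sy}` into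
`λ/(s+λ) · e^{-(s+λ)t}`. Summing gives `e^{-st} - s/(s+λ) · e^{-(s+λ)t}`, and independence lets
us integrate this over the law of `T`. -/

lemma integrable_exp_neg_mul_of_nonneg {Ω : Type*} [MeasurableSpace Ω] {μ : Measure Ω}
    [IsFiniteMeasure μ] {X : Ω → ℝ} (hX : AEMeasurable X μ) (hX0 : ∀ᵐ ω ∂μ, 0 ≤ X ω)
    {c : ℝ} (hc : 0 ≤ c) :
    Integrable (fun ω => exp (-(c * X ω))) μ :=
  Integrable.of_bound (measurable_exp.comp_aemeasurable (hX.const_mul c).neg).aestronglyMeasurable 1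
    (hX0.mono fun ω hω => by
      rw [norm_of_nonneg (exp_pos _).le, exp_le_one_iff, neg_nonpos]
      exact mul_nonneg hc hω)

lemma ProbabilityTheory.IndepFun.integral_comp_eq_integral_integral_map
    {Ω α β E : Type*} [MeasurableSpace Ω] [MeasurableSpace α] [MeasurableSpace β]
    [NormedAddCommGroup E] [NormedSpace ℝ E] {μ : Measure Ω} [IsFiniteMeasure μ]
    {X : Ω → α} {Y : Ω → β} (hXY : IndepFun X Y μ) (hX : AEMeasurable X μ)
    (hY : AEMeasurable Y μ) {f : α × β → E}
    (hf : AEStronglyMeasurable f ((μ.map X).prod (μ.map Y)))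
    (hfi : Integrable (fun ω => f (X ω, Y ω)) μ) :
    ∫ ω, f (X ω, Y ω) ∂μ = ∫ ω, ∫ y, f (X ω, y) ∂(μ.map Y) ∂μ := by
  have hmap : μ.map (fun ω => (X ω, Y ω)) = (μ.map X).prod (μ.map Y) :=
    (indepFun_iff_map_prod_eq_prod_map_map hX hY).mp hXY
  have hf' : AEStronglyMeasurable f (μ.map fun ω => (X ω, Y ω)) := hmap ▸ hf
  have hfi' : Integrable f ((μ.map X).prod (μ.map Y)) :=
    hmap ▸ (integrable_map_measure hf' (hX.prodMk hY)).2 hfi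
  calc ∫ ω, f (X ω, Y ω) ∂μ = ∫ p, f p ∂((μ.map X).prod (μ.map Y)) := by
        rw [← hmap, integral_map (hX.prodMk hY) hf']
    _ = ∫ x, ∫ y, f (x, y) ∂(μ.map Y) ∂(μ.map X) := integral_prod f hfi'
    _ = ∫ ω, ∫ y, f (X ω, y) ∂(μ.map Y) ∂μ := integral_map hX hf.integral_prod_right'

section ExponentialDistribution

variable {r : ℝ}

lemma setIntegral_expMeasure_of_subset_Ici (hr : 0 < r) {S : Set ℝ} (hS : MeasurableSet S)
    (hS0 : S ⊆ Ici 0) (f : ℝ → ℝ) :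
    ∫ y in S, f y ∂expMeasure r = ∫ y in S, r * exp (-(r * y)) * f y := by
  have hmeas : Measurable (gammaPDF 1 r) := (measurable_gammaPDFReal 1 r).ennreal_ofReal
  rw [expMeasure, gammaMeasure, setIntegral_withDensity_eq_setIntegral_toReal_smul' S hmeas
    (ae_of_all _ fun _ => ENNReal.ofReal_lt_top) f]
  refine setIntegral_congr_fun hS fun y hy => ?_
  have hpdf : gammaPDF 1 r y = exponentialPDF r y := rfl
  rw [hpdf, exponentialPDF_of_nonneg (hS0 hy), ENNReal.toReal_ofReal (by positivity), smul_eq_mul]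

lemma setIntegral_Ioi_exp_neg_mul_expMeasure (hr : 0 < r) {s t : ℝ} (hrs : 0 < r + s)
    (ht : 0 ≤ t) :
    ∫ y in Ioi t, exp (-(s * y)) ∂expMeasure r = r / (r + s) * exp (-((r + s) * t)) := by
  have hexp : ∀ y, r * exp (-(r * y)) * exp (-(s * y)) = r * exp (-(r + s) * y) := fun y => by
    rw [mul_assoc, ← exp_add]; ring_nf
  rw [setIntegral_expMeasure_of_subset_Ici hr measurableSet_Ioi (Ioi_subset_Ici ht)]
  simp_rw [hexp, integral_const_mul, integral_exp_mul_Ioi (neg_neg_of_pos hrs)]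
  field_simp

lemma expMeasure_real_Iic (hr : 0 < r) {t : ℝ} (ht : 0 ≤ t) :
    (expMeasure r).real (Iic t) = 1 - exp (-(r * t)) := by
  have := isProbabilityMeasure_expMeasure hr
  rw [← cdf_eq_real, cdf_expMeasure_eq hr, if_pos ht]

lemma integral_exp_neg_mul_max_expMeasure (hr : 0 < r) {s t : ℝ} (hs : 0 ≤ s) (ht : 0 ≤ t) :
    ∫ y, exp (-(s * max t y)) ∂expMeasure r
      = exp (-(s * t)) - s / (s + r) * exp (-((s + r) * t)) := by
  have := isProbabilityMeasure_expMeasure hr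
  have hint : Integrable (fun y => exp (-(s * max t y))) (expMeasure r) :=
    integrable_exp_neg_mul_of_nonneg (by fun_prop)
      (ae_of_all _ fun y => ht.trans (le_max_left t y)) hs
  have hlow : ∫ y in Iic t, exp (-(s * max t y)) ∂expMeasure r
      = (1 - exp (-(r * t))) * exp (-(s * t)) := by
    rw [setIntegral_congr_fun measurableSet_Iic fun y hy => by rw [max_eq_left hy],
      setIntegral_const, smul_eq_mul, expMeasure_real_Iic hr ht]
  have hhigh : ∫ y in Ioi t, exp (-(s * max t y)) ∂expMeasure r
      = r / (r + s) * exp (-((r + s) * t)) := by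
    rw [setIntegral_congr_fun measurableSet_Ioi fun y hy => by rw [max_eq_right (le_of_lt hy)],
      setIntegral_Ioi_exp_neg_mul_expMeasure hr (by linarith) ht]
  have hexp : exp (-(r * t)) * exp (-(s * t)) = exp (-((s + r) * t)) := by
    rw [← exp_add]; ring_nf
  rw [← integral_add_compl measurableSet_Iic hint, compl_Iic, hlow, hhigh, sub_mul, one_mul,
    hexp, add_comm r s]
  field_simp
  ring

end ExponentialDistribution

/-- The identity producing the peak-age term in the paper's AoI LST (equation (9)):
if `T ≥ 0` and `Y` is an independent exponential random variable with rate `λ`, then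
`E[exp(−s·max(T,Y))] = E[exp(−s·T)] − (s/(s+λ))·E[exp(−(s+λ)·T)]` for every `s > 0`. -/
theorem stmt_10
    {Ω : Type*} [MeasureSpace Ω] (μ : Measure Ω) [IsProbabilityMeasure μ]
    (lam : ℝ) (hlam : 0 < lam)
    (T Y : Ω → ℝ) (hT : Measurable T) (hY : Measurable Y)
    (hTnonneg : ∀ ω, 0 ≤ T ω)
    (hYexp : Measure.map Y μ = expMeasure lam)
    (hindep : IndepFun T Y μ)
    (s : ℝ) (hs : 0 < s) :
    ∫ ω, Real.exp (-(s * max (T ω) (Y ω))) ∂μ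
      = (∫ ω, Real.exp (-(s * T ω)) ∂μ)
        - (s / (s + lam)) * ∫ ω, Real.exp (-((s + lam) * T ω)) ∂μ := by
  have hT0 : ∀ᵐ ω ∂μ, 0 ≤ T ω := ae_of_all _ hTnonneg
  calc ∫ ω, exp (-(s * max (T ω) (Y ω))) ∂μ
      = ∫ ω, ∫ y, exp (-(s * max (T ω) y)) ∂(μ.map Y) ∂μ :=
        hindep.integral_comp_eq_integral_integral_map (f := fun p => exp (-(s * max p.1 p.2)))
          hT.aemeasurable hY.aemeasurable (by fun_prop)
          (integrable_exp_neg_mul_of_nonneg (by fun_prop)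
            (hT0.mono fun ω h => h.trans (le_max_left _ _)) hs.le)
    _ = ∫ ω, (exp (-(s * T ω)) - s / (s + lam) * exp (-((s + lam) * T ω))) ∂μ := by
        simp_rw [hYexp, integral_exp_neg_mul_max_expMeasure hlam hs.le (hTnonneg _)]
    _ = _ := by
        rw [integral_sub (integrable_exp_neg_mul_of_nonneg hT.aemeasurable hT0 hs.le)
          ((integrable_exp_neg_mul_of_nonneg hT.aemeasurable hT0 (by positivity)).const_mul _),
          integral_const_mul]
end
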